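/- Exponential supremum inequality (Donsker–Varadhan plus Hoeffding–Azuma step): Let μ be any probability distribution on 𝒜 and let ε ∈ (0,1] satisfy π_n(a) ≥ ε almost surely for all a ∈ 𝒜 and all n ∈ {1,…,t}. Then for every λ > 0: E[ exp( sup_{π} { λ (r̂^IS(π, H^t) − r̄(π)) − KL(π‖μ) } − λ²/(8 t ε²) ) ] ≤ 1, where the supremum is over all probability distributions π on 𝒜. -/

import Mathlib

/-!
Fix an action `a`. The importance-weighted increments
`Z_n = 1{A_n = a} R_n / π_n(a) - r̄(a)` are adapted to the history filtration, have conditional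
mean zero (the conditional mean of `1{A_n = a}` is `π_n(a)`, and that of `R_n` given `A_n` is
`r̄(A_n)`), and lie in an interval of length `1/ε`. Conditionally on the past, `exp (s Z_n)` lies
below its chord over that interval; the conditional mean of the chord is the moment generating
function of a mean-zero two-point law, which Hoeffding's lemma bounds by `exp (s² / (8 ε²))`.
Iterating with the tower property gives `E exp (λ (r̂(a) - r̄(a))) ≤ exp (λ² / (8 t ε²))`.
Finally, the Gibbs variational inequality bounds `exp (sup_π {λ (r̂(π) - r̄(π)) - KL(π‖μ)})`
pointwise by `∑_a μ(a) exp (λ (r̂(a) - r̄(a)))`, and integrating gives the claim.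
-/

open MeasureTheory Real

namespace OfflineBandits

/-- The σ-algebra generated by the history `H^n = (A_1, R_1, …, A_n, R_n)`
(trivial for `n = 0`). -/
def hist {Ω 𝒜 : Type*} [MeasurableSpace 𝒜] (A : ℕ → Ω → 𝒜) (R : ℕ → Ω → ℝ)
    (n : ℕ) : MeasurableSpace Ω :=
  MeasurableSpace.comap (fun ω => fun i : Fin n => (A (i.1 + 1) ω, R (i.1 + 1) ω)) inferInstance

/-- `p` is a probability mass function on the finite action set `𝒜`. -/
def IsPMF {𝒜 : Type*} [Fintype 𝒜] (p : 𝒜 → ℝ) : Prop :=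
  (∀ a, 0 ≤ p a) ∧ ∑ a, p a = 1

/-- Relative entropy (KL divergence) between two pmfs on a finite set. -/
noncomputable def KL {𝒜 : Type*} [Fintype 𝒜] (p q : 𝒜 → ℝ) : ℝ :=
  ∑ a, p a * Real.log (p a / q a)

/-- Importance-sampling estimate `r̂^IS(a, H^t)` of the expected reward of action `a`. -/
noncomputable def rIS {Ω 𝒜 : Type*} [DecidableEq 𝒜] (A : ℕ → Ω → 𝒜) (R : ℕ → Ω → ℝ)
    (pol : ℕ → Ω → 𝒜 → ℝ) (t : ℕ) (a : 𝒜) (ω : Ω) : ℝ :=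
  (t : ℝ)⁻¹ * ∑ n ∈ Finset.Icc 1 t, (if A n ω = a then 1 else 0) / pol n ω (A n ω) * R n ω

/-- Importance-sampling estimate `r̂^IS(π, H^t)` of the expected reward of a policy. -/
noncomputable def rISPol {Ω 𝒜 : Type*} [Fintype 𝒜] [DecidableEq 𝒜] (A : ℕ → Ω → 𝒜) (R : ℕ → Ω → ℝ)
    (pol : ℕ → Ω → 𝒜 → ℝ) (t : ℕ) (p : 𝒜 → ℝ) (ω : Ω) : ℝ :=
  ∑ a, p a * rIS A R pol t a ω

/-- Expected reward `r̄(π)` of a policy `π`. -/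
def rPol {𝒜 : Type*} [Fintype 𝒜] (rbar : 𝒜 → ℝ) (p : 𝒜 → ℝ) : ℝ :=
  ∑ a, p a * rbar a

/-- The martingale difference `Z_n^IS(a)`. -/
noncomputable def Zis {Ω 𝒜 : Type*} [DecidableEq 𝒜] (A : ℕ → Ω → 𝒜) (R : ℕ → Ω → ℝ)
    (pol : ℕ → Ω → 𝒜 → ℝ) (rbar : 𝒜 → ℝ) (a : 𝒜) (n : ℕ) (ω : Ω) : ℝ :=
  (if A n ω = a then 1 else 0) / pol n ω (A n ω) * R n ω - rbar a

/-- The cumulative conditional variance `V_t^IS(a)` of the IS martingale. -/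
noncomputable def Vis {Ω 𝒜 : Type*} [MeasurableSpace Ω] [MeasurableSpace 𝒜] [DecidableEq 𝒜]
    (P : Measure Ω) (A : ℕ → Ω → 𝒜) (R : ℕ → Ω → ℝ)
    (pol : ℕ → Ω → 𝒜 → ℝ) (rbar : 𝒜 → ℝ) (t : ℕ) (a : 𝒜) (ω : Ω) : ℝ :=
  ∑ n ∈ Finset.Icc 1 t, (P[fun ω' => (Zis A R pol rbar a n ω') ^ 2 | hist A R (n - 1)]) ω

open ProbabilityTheory

lemma exp_mul_le_chord {a b z : ℝ} (s : ℝ) (hab : a < b) (hz : z ∈ Set.Icc a b) :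
    exp (s * z) ≤ (b * exp (s * a) - a * exp (s * b)) / (b - a)
      + (exp (s * b) - exp (s * a)) / (b - a) * z := by
  have hba : 0 < b - a := sub_pos.2 hab
  have h := convexOn_exp.2 (Set.mem_univ (s * a)) (Set.mem_univ (s * b))
    (div_nonneg (sub_nonneg.2 hz.2) hba.le) (div_nonneg (sub_nonneg.2 hz.1) hba.le)
    (by field_simp; ring)
  have hz' : s * z = (b - z) / (b - a) * (s * a) + (z - a) / (b - a) * (s * b) := by
    field_simp; ring
  simp only [smul_eq_mul] at h
  calc exp (s * z) = _ := by rw [hz']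
    _ ≤ _ := h
    _ = _ := by ring

lemma two_point_mgf_le {a b : ℝ} (s : ℝ) (ha : a ≤ 0) (hb : 0 ≤ b) (hab : a < b) :
    (b * exp (s * a) - a * exp (s * b)) / (b - a) ≤ exp (s ^ 2 * (b - a) ^ 2 / 8) := by
  have hba : 0 < b - a := sub_pos.2 hab
  have hwa : 0 ≤ b / (b - a) := by positivity
  have hwb : 0 ≤ -a / (b - a) := div_nonneg (by linarith) hba.le
  set ν : Measure ℝ := ENNReal.ofReal (b / (b - a)) • Measure.dirac a
    + ENNReal.ofReal (-a / (b - a)) • Measure.dirac b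
  have hν (f : ℝ → ℝ) : ∫ x, f x ∂ν = b / (b - a) * f a + -a / (b - a) * f b := by
    rw [integral_add_measure, integral_smul_measure, integral_smul_measure, integral_dirac,
      integral_dirac, ENNReal.toReal_ofReal hwa, ENNReal.toReal_ofReal hwb]
    · rfl
    all_goals exact (integrable_dirac (by simp)).smul_measure (by simp)
  have : IsProbabilityMeasure ν := ⟨by
    simp only [ν, Measure.coe_add, Measure.coe_smul, Pi.add_apply, Pi.smul_apply,
      measure_univ, smul_eq_mul, mul_one]
    rw [← ENNReal.ofReal_add hwa hwb, ← add_div, ← sub_eq_add_neg, div_self hba.ne',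
      ENNReal.ofReal_one]⟩
  have hsupp : ∀ᵐ x ∂ν, x ∈ Set.Icc a b := by
    rw [ae_add_measure_iff]
    exact ⟨Measure.ae_smul_measure ((ae_dirac_iff measurableSet_Icc).2 ⟨le_rfl, hab.le⟩) _,
      Measure.ae_smul_measure ((ae_dirac_iff measurableSet_Icc).2 ⟨hab.le, le_rfl⟩) _⟩
  have hmean : ν[id] = 0 := by rw [hν, id, id]; field_simp; ring
  -- the left-hand side is the mgf at `s` of the mean-zero law `ν` on `{a, b}`
  have := (hasSubgaussianMGF_of_mem_Icc_of_integral_eq_zero aemeasurable_id hsupp hmean).mgf_le s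
  rw [mgf, hν] at this
  convert this using 1
  · simp only [id]; field_simp; ring
  · congr 1
    rw [NNReal.coe_pow, NNReal.coe_div, coe_nnnorm, Real.norm_of_nonneg hba.le]
    push_cast; ring

lemma condExp_exp_mul_le_of_mem_Icc {Ω : Type*} {m mΩ : MeasurableSpace Ω} (hm : m ≤ mΩ)
    {P : Measure Ω} [IsProbabilityMeasure P] {Z : Ω → ℝ} (hZ : AEMeasurable Z P) {a b : ℝ}
    (hbd : ∀ᵐ ω ∂P, Z ω ∈ Set.Icc a b) (hmean : P[Z|m] =ᵐ[P] 0) (s : ℝ) :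
    P[fun ω => exp (s * Z ω)|m] ≤ᵐ[P] fun _ => exp (s ^ 2 * (b - a) ^ 2 / 8) := by
  have hZint : Integrable Z P := Integrable.of_mem_Icc a b hZ hbd
  have hint : ∫ ω, Z ω ∂P = 0 := by
    rw [← integral_condExp hm, integral_congr_ae hmean, Pi.zero_def, integral_zero]
  have ha : a ≤ 0 := by
    simpa [hint] using integral_mono_ae (integrable_const a) hZint (hbd.mono fun _ h => h.1)
  have hb : 0 ≤ b := by
    simpa [hint] using integral_mono_ae hZint (integrable_const b) (hbd.mono fun _ h => h.2)
  rcases (ha.trans hb).eq_or_lt with rfl | hab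
  · obtain rfl : a = 0 := le_antisymm ha hb
    have hZ0 : (fun ω => exp (s * Z ω)) =ᵐ[P] fun _ => 1 := by
      filter_upwards [hbd] with ω hω
      simp [le_antisymm hω.2 hω.1]
    filter_upwards [condExp_congr_ae (m := m) hZ0] with ω hω
    simp [hω, condExp_const hm]
  set α := (b * exp (s * a) - a * exp (s * b)) / (b - a)
  set β := (exp (s * b) - exp (s * a)) / (b - a)
  have hchord : (fun ω => exp (s * Z ω)) ≤ᵐ[P] fun ω => α + β * Z ω := by
    filter_upwards [hbd] with ω hω using exp_mul_le_chord s hab hω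
  have haffine : P[fun ω => α + β * Z ω|m] =ᵐ[P] fun _ => α := by
    filter_upwards [condExp_add (integrable_const α) (hZint.const_mul β) m,
      condExp_smul (μ := P) β Z m, hmean] with ω h1 h2 h3
    refine h1.trans ?_
    rw [Pi.add_apply, condExp_const hm]
    change α + P[β • Z|m] ω = α
    simp [h2, h3]
  filter_upwards [condExp_mono (integrable_exp_mul_of_mem_Icc hZ hbd)
    ((integrable_const α).add (hZint.const_mul β)) hchord, haffine] with ω h1 h2
  exact h1.trans (h2.trans_le (two_point_mgf_le s ha hb hab))

section Azuma

variable {Ω : Type*} {mΩ : MeasurableSpace Ω} {P : Measure Ω}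

lemma ae_sum_mem_Icc {ι : Type*} {s : Finset ι} {Z : ι → Ω → ℝ} {a b : ℝ}
    (hbd : ∀ n ∈ s, ∀ᵐ ω ∂P, Z n ω ∈ Set.Icc a b) :
    ∀ᵐ ω ∂P, ∑ n ∈ s, Z n ω ∈ Set.Icc (s.card * a) (s.card * b) := by
  filter_upwards [(Filter.eventually_all_finset s).2 hbd] with ω hω
  rw [← nsmul_eq_mul, ← nsmul_eq_mul]
  exact ⟨Finset.card_nsmul_le_sum _ _ _ fun n hn => (hω n hn).1,
    Finset.sum_le_card_nsmul _ _ _ fun n hn => (hω n hn).2⟩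

lemma integral_exp_mul_sum_Icc_le_pow [IsProbabilityMeasure P] (ℱ : Filtration ℕ mΩ)
    {Z : ℕ → Ω → ℝ} {a b s K : ℝ} (hK : 0 ≤ K) {N : ℕ}
    (hadapt : ∀ n ∈ Finset.Icc 1 N, StronglyMeasurable[ℱ n] (Z n))
    (hbd : ∀ n ∈ Finset.Icc 1 N, ∀ᵐ ω ∂P, Z n ω ∈ Set.Icc a b)
    (hcond : ∀ n ∈ Finset.Icc 1 N, P[fun ω => exp (s * Z n ω)|ℱ (n - 1)] ≤ᵐ[P] fun _ => K) :
    ∫ ω, exp (s * ∑ n ∈ Finset.Icc 1 N, Z n ω) ∂P ≤ K ^ N := by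
  induction N with
  | zero => simp
  | succ N ih =>
    have hsub : Finset.Icc 1 N ⊆ Finset.Icc 1 (N + 1) := Finset.Icc_subset_Icc_right N.le_succ
    have hlast : N + 1 ∈ Finset.Icc 1 (N + 1) := by simp
    set f := fun ω => exp (s * ∑ n ∈ Finset.Icc 1 N, Z n ω)
    set g := fun ω => exp (s * Z (N + 1) ω)
    have hfg : (fun ω => exp (s * ∑ n ∈ Finset.Icc 1 (N + 1), Z n ω)) = f * g := by
      ext ω
      simp only [f, g, Pi.mul_apply, Finset.sum_Icc_succ_top (Nat.le_add_left 1 N), mul_add,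
        exp_add]
    have hmeas : ∀ n ∈ Finset.Icc 1 (N + 1), AEMeasurable (Z n) P := fun n hn =>
      ((hadapt n hn).mono (ℱ.le n)).measurable.aemeasurable
    have hfm : StronglyMeasurable[ℱ N] f := by
      refine continuous_exp.comp_stronglyMeasurable (.const_mul ?_ s)
      refine Finset.stronglyMeasurable_fun_sum _ fun n hn => ?_
      exact (hadapt n (hsub hn)).mono (ℱ.mono (Finset.mem_Icc.1 hn).2)
    have hfgint : Integrable (f * g) P := by
      rw [← hfg]
      exact integrable_exp_mul_of_mem_Icc (Finset.aemeasurable_fun_sum _ hmeas)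
        (ae_sum_mem_Icc hbd)
    have hfint : Integrable f P :=
      integrable_exp_mul_of_mem_Icc (Finset.aemeasurable_fun_sum _ fun n hn => hmeas n (hsub hn))
        (ae_sum_mem_Icc fun n hn => hbd n (hsub hn))
    have hgint : Integrable g P :=
      integrable_exp_mul_of_mem_Icc (hmeas _ hlast) (hbd _ hlast)
    have hpull : P[f * g|ℱ N] =ᵐ[P] f * P[g|ℱ N] :=
      condExp_mul_of_stronglyMeasurable_left hfm hfgint hgint
    calc ∫ ω, exp (s * ∑ n ∈ Finset.Icc 1 (N + 1), Z n ω) ∂P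
        = ∫ ω, (f * P[g|ℱ N]) ω ∂P := by
          rw [hfg, ← integral_condExp (ℱ.le N)]
          exact integral_congr_ae hpull
      _ ≤ ∫ ω, f ω * K ∂P := by
          refine integral_mono_ae (integrable_condExp.congr hpull) (hfint.mul_const K) ?_
          filter_upwards [hcond _ hlast] with ω hω
          exact mul_le_mul_of_nonneg_left hω (exp_pos _).le
      _ = (∫ ω, f ω ∂P) * K := integral_mul_const K f
      _ ≤ K ^ N * K := by
          gcongr
          exact ih (fun n hn => hadapt n (hsub hn)) (fun n hn => hbd n (hsub hn))
            (fun n hn => hcond n (hsub hn))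
      _ = K ^ (N + 1) := (pow_succ K N).symm

lemma hasSubgaussianMGF_sum_Icc_of_condExp_eq_zero [IsProbabilityMeasure P]
    (ℱ : Filtration ℕ mΩ) {Z : ℕ → Ω → ℝ} {a b : ℝ} {N : ℕ}
    (hadapt : ∀ n ∈ Finset.Icc 1 N, StronglyMeasurable[ℱ n] (Z n))
    (hbd : ∀ n ∈ Finset.Icc 1 N, ∀ᵐ ω ∂P, Z n ω ∈ Set.Icc a b)
    (hmean : ∀ n ∈ Finset.Icc 1 N, P[Z n|ℱ (n - 1)] =ᵐ[P] 0) :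
    HasSubgaussianMGF (fun ω => ∑ n ∈ Finset.Icc 1 N, Z n ω) (N * (‖b - a‖₊ / 2) ^ 2) P := by
  have hmeas : ∀ n ∈ Finset.Icc 1 N, AEMeasurable (Z n) P := fun n hn =>
    ((hadapt n hn).mono (ℱ.le n)).measurable.aemeasurable
  refine ⟨fun s => integrable_exp_mul_of_mem_Icc (Finset.aemeasurable_fun_sum _ hmeas)
    (ae_sum_mem_Icc hbd), fun s => ?_⟩
  calc mgf (fun ω => ∑ n ∈ Finset.Icc 1 N, Z n ω) P s
      ≤ exp (s ^ 2 * (b - a) ^ 2 / 8) ^ N :=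
        integral_exp_mul_sum_Icc_le_pow ℱ (exp_pos _).le hadapt hbd fun n hn =>
          condExp_exp_mul_le_of_mem_Icc (ℱ.le _) (hmeas n hn) (hbd n hn) (hmean n hn) s
    _ = _ := by
        rw [← exp_nat_mul]
        congr 1
        push_cast
        rw [Real.norm_eq_abs, div_pow, sq_abs]
        ring

end Azuma

lemma mul_sub_log_div_sub_log_le {pa μa Fa Z : ℝ} (hp : 0 ≤ pa) (hμ : 0 ≤ μa)
    (hpμ : μa = 0 → pa = 0) (hZ : 0 < Z) :
    pa * (Fa - log (pa / μa) - log Z) ≤ μa * exp Fa / Z - pa := by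
  rcases hp.eq_or_lt with rfl | hp_pos
  · rw [zero_mul, sub_zero]; positivity
  have hμ_pos : 0 < μa := hμ.lt_of_ne fun h => hp_pos.ne' (hpμ h.symm)
  have hy : 0 < μa * exp Fa / Z / pa := by positivity
  -- `log y ≤ y - 1` at `y = μa e^Fa / (Z pa)`
  calc pa * (Fa - log (pa / μa) - log Z) = pa * log (μa * exp Fa / Z / pa) := by
        rw [log_div (by positivity) hp_pos.ne', log_div (by positivity) hZ.ne',
          log_mul hμ_pos.ne' (exp_pos _).ne', log_exp, log_div hp_pos.ne' hμ_pos.ne']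
        ring
    _ ≤ pa * (μa * exp Fa / Z / pa - 1) := by gcongr; exact log_le_sub_one_of_pos hy
    _ = μa * exp Fa / Z - pa := by field_simp

section DonskerVaradhan

variable {𝒜 : Type*} [Fintype 𝒜] {μ p : 𝒜 → ℝ}

lemma sum_mul_exp_pos (hμ : IsPMF μ) (F : 𝒜 → ℝ) : 0 < ∑ a, μ a * exp (F a) := by
  obtain ⟨a₀, -, ha₀⟩ := Finset.exists_ne_zero_of_sum_ne_zero (hμ.2.trans_ne one_ne_zero)
  exact Finset.sum_pos' (fun a _ => by have := hμ.1 a; positivity)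
    ⟨a₀, Finset.mem_univ _, by have := (hμ.1 a₀).lt_of_ne' ha₀; positivity⟩

lemma sum_mul_sub_KL_le_log_sum_mul_exp (hμ : IsPMF μ) (hp : IsPMF p)
    (hpμ : ∀ a, μ a = 0 → p a = 0) (F : 𝒜 → ℝ) :
    ∑ a, p a * F a - KL p μ ≤ log (∑ a, μ a * exp (F a)) := by
  have hZ := sum_mul_exp_pos hμ F
  have key := Finset.sum_le_sum fun a (_ : a ∈ Finset.univ) =>
    mul_sub_log_div_sub_log_le (Fa := F a) (hp.1 a) (hμ.1 a) (hpμ a) hZ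
  simp only [mul_sub, Finset.sum_sub_distrib, ← Finset.sum_mul, ← Finset.sum_div, hp.2,
    div_self hZ.ne', one_mul] at key
  rw [KL]
  linarith

lemma exp_iSup_sum_mul_sub_KL_le (hμ : IsPMF μ) (F : 𝒜 → ℝ) :
    exp (⨆ p : {p : 𝒜 → ℝ // IsPMF p ∧ ∀ a, μ a = 0 → p a = 0}, (∑ a, p.1 a * F a - KL p.1 μ))
      ≤ ∑ a, μ a * exp (F a) := by
  have : Nonempty {p : 𝒜 → ℝ // IsPMF p ∧ ∀ a, μ a = 0 → p a = 0} := ⟨⟨μ, hμ, fun _ h => h⟩⟩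
  rw [← exp_log (sum_mul_exp_pos hμ F), exp_le_exp]
  exact ciSup_le fun p => sum_mul_sub_KL_le_log_sum_mul_exp hμ p.2.1 p.2.2 F

end DonskerVaradhan

lemma integral_exp_sub_le_one_of_le_sum_mul_exp {Ω 𝒜 : Type*} [MeasurableSpace Ω] [Fintype 𝒜]
    {P : Measure Ω} {μ : 𝒜 → ℝ} (hμ : IsPMF μ) {S : Ω → ℝ} {Y : 𝒜 → Ω → ℝ} {c : ℝ}
    (hY : ∀ a, Integrable (fun ω => exp (Y a ω)) P) (hYc : ∀ a, ∫ ω, exp (Y a ω) ∂P ≤ exp c)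
    (hS : ∀ ω, exp (S ω) ≤ ∑ a, μ a * exp (Y a ω)) :
    ∫ ω, exp (S ω - c) ∂P ≤ 1 := by
  have hint : Integrable (fun ω => ∑ a, μ a * exp (Y a ω)) P :=
    integrable_finsetSum _ fun a _ => (hY a).const_mul (μ a)
  calc ∫ ω, exp (S ω - c) ∂P ≤ ∫ ω, (∑ a, μ a * exp (Y a ω)) / exp c ∂P :=
        integral_mono_of_nonneg (.of_forall fun _ => (exp_pos _).le) (hint.div_const _)
          (.of_forall fun ω =>
            (exp_sub _ _).trans_le (div_le_div_of_nonneg_right (hS ω) (exp_pos c).le))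
    _ = (∑ a, μ a * ∫ ω, exp (Y a ω) ∂P) / exp c := by
        rw [integral_div, integral_finsetSum _ fun a _ => (hY a).const_mul (μ a)]
        simp only [integral_const_mul]
    _ ≤ (∑ a, μ a * exp c) / exp c := by
        gcongr with a
        · exact hμ.1 a
        · exact hYc a
    _ = 1 := by rw [← Finset.sum_mul, hμ.2, one_mul, div_self (exp_pos _).ne']

section History

variable {Ω 𝒜 : Type*} [MeasurableSpace 𝒜]
  {A : ℕ → Ω → 𝒜} {R : ℕ → Ω → ℝ}

lemma hist_mono : Monotone (hist A R) := by
  intro m n hmn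
  have hcomp : (fun ω => fun i : Fin m => (A (i.1 + 1) ω, R (i.1 + 1) ω))
      = (fun v : Fin n → 𝒜 × ℝ => fun i : Fin m => v (Fin.castLE hmn i))
        ∘ fun ω => fun i : Fin n => (A (i.1 + 1) ω, R (i.1 + 1) ω) := rfl
  rw [hist, hist, hcomp, ← MeasurableSpace.comap_comp]
  exact MeasurableSpace.comap_mono (measurable_pi_lambda _ fun i => measurable_pi_apply _).comap_le

lemma measurable_prodMk_hist {k n : ℕ} (hk : 1 ≤ k) (hkn : k ≤ n) :
    Measurable[hist A R n] fun ω => (A k ω, R k ω) := by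
  have hcomp : (fun ω => (A k ω, R k ω)) = (fun v : Fin n → 𝒜 × ℝ => v ⟨k - 1, by omega⟩)
      ∘ fun ω => fun i : Fin n => (A (i.1 + 1) ω, R (i.1 + 1) ω) := by
    ext ω <;> simp [Nat.sub_add_cancel hk]
  rw [hcomp]
  exact (measurable_pi_apply _).comp (comap_measurable _)

lemma measurable_A_hist {k n : ℕ} (hk : 1 ≤ k) (hkn : k ≤ n) : Measurable[hist A R n] (A k) :=
  measurable_fst.comp (measurable_prodMk_hist hk hkn)

lemma measurable_R_hist {k n : ℕ} (hk : 1 ≤ k) (hkn : k ≤ n) : Measurable[hist A R n] (R k) :=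
  measurable_snd.comp (measurable_prodMk_hist hk hkn)

def histFiltration [mΩ : MeasurableSpace Ω] (hA : ∀ n, Measurable (A n))
    (hR : ∀ n, Measurable (R n)) : Filtration ℕ mΩ where
  seq := hist A R
  mono' := hist_mono
  le' _ := (measurable_pi_lambda _ fun _ => (hA _).prodMk (hR _)).comap_le

end History

section ConditionalMean

variable {Ω 𝒜 : Type*} {m mΩ : MeasurableSpace Ω} [MeasurableSpace 𝒜] [MeasurableSingletonClass 𝒜]
  [DecidableEq 𝒜] {P : Measure Ω} [IsProbabilityMeasure P] {X : Ω → 𝒜} {Y : Ω → ℝ}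

lemma condExp_ite_mul_of_condExp_eq_comp (hm : m ≤ mΩ) (hX : Measurable X)
    (hY : Integrable Y P) {g : 𝒜 → ℝ}
    (hYX : P[Y | m ⊔ MeasurableSpace.comap X inferInstance] =ᵐ[P] fun ω => g (X ω)) (a : 𝒜) :
    P[fun ω => (if X ω = a then 1 else 0) * Y ω | m]
      =ᵐ[P] fun ω => g a * P[fun ω => if X ω = a then (1 : ℝ) else 0 | m] ω := by
  set 𝒢 := m ⊔ MeasurableSpace.comap X inferInstance
  have h𝒢 : 𝒢 ≤ mΩ := sup_le hm hX.comap_le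
  set I : Ω → ℝ := fun ω => if X ω = a then 1 else 0
  have hXa : MeasurableSet[𝒢] {ω | X ω = a} :=
    le_sup_right (a := m) _ ⟨{a}, measurableSet_singleton a, rfl⟩
  have hI : StronglyMeasurable[𝒢] I :=
    (Measurable.ite hXa measurable_const measurable_const).stronglyMeasurable
  have hI𝒢 : P[I * Y | 𝒢] =ᵐ[P] g a • I := by
    filter_upwards [condExp_stronglyMeasurable_mul_of_bound h𝒢 hI hY 1
      (.of_forall fun ω => by by_cases h : X ω = a <;> simp [I, h]), hYX] with ω h1 h2
    rw [h1, Pi.mul_apply, h2]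
    by_cases h : X ω = a <;> simp [I, h]
  calc P[I * Y | m] =ᵐ[P] P[P[I * Y | 𝒢] | m] := (condExp_condExp_of_le le_sup_left h𝒢).symm
    _ =ᵐ[P] P[g a • I | m] := condExp_congr_ae hI𝒢
    _ =ᵐ[P] g a • P[I | m] := condExp_smul _ _ _

lemma condExp_ite_div_mul_of_condExp_eq_comp (hm : m ≤ mΩ) (hX : Measurable X)
    (hY : Integrable Y P) {g : 𝒜 → ℝ}
    (hYX : P[Y | m ⊔ MeasurableSpace.comap X inferInstance] =ᵐ[P] fun ω => g (X ω)) {a : 𝒜}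
    {q : Ω → ℝ} (hq : Measurable[m] q)
    (hXq : P[fun ω => if X ω = a then (1 : ℝ) else 0 | m] =ᵐ[P] q)
    {ε : ℝ} (hε : 0 < ε) (hεq : ∀ᵐ ω ∂P, ε ≤ q ω) :
    P[fun ω => (if X ω = a then 1 else 0) / q ω * Y ω | m] =ᵐ[P] fun _ => g a := by
  have heq : (fun ω => (if X ω = a then 1 else 0) / q ω * Y ω)
      = q⁻¹ * fun ω => (if X ω = a then 1 else 0) * Y ω := by
    ext ω; simp only [Pi.mul_apply, Pi.inv_apply]; ring
  have hIY : Integrable (fun ω => (if X ω = a then 1 else 0) * Y ω) P :=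
    hY.bdd_mul (c := 1) (Measurable.ite (hX (measurableSet_singleton a)) measurable_const
      measurable_const).aestronglyMeasurable
      (.of_forall fun ω => by by_cases h : X ω = a <;> simp [h])
  have hq_inv : ∀ᵐ ω ∂P, ‖(q ω)⁻¹‖ ≤ ε⁻¹ := by
    filter_upwards [hεq] with ω hω
    rw [norm_inv, Real.norm_of_nonneg (hε.le.trans hω)]
    exact inv_anti₀ hε hω
  rw [heq]
  filter_upwards [condExp_stronglyMeasurable_mul_of_bound hm hq.inv.stronglyMeasurable hIY _ hq_inv,
    condExp_ite_mul_of_condExp_eq_comp hm hX hY hYX a, hXq, hεq] with ω h1 h2 h3 h4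
  rw [h1, Pi.mul_apply, Pi.inv_apply, h2, h3]
  field_simp [(hε.trans_le h4).ne']

end ConditionalMean

lemma ite_div_mul_mem_Icc (p : Prop) [Decidable p] {ε q r : ℝ} (hε : 0 < ε) (hq : ε ≤ q)
    (hr : r ∈ Set.Icc (0 : ℝ) 1) : (if p then 1 else 0) / q * r ∈ Set.Icc 0 ε⁻¹ := by
  have hq0 : 0 < q := hε.trans_le hq
  split_ifs
  · rw [one_div_mul_eq_div, ← one_div]
    exact ⟨div_nonneg hr.1 hq0.le, div_le_div₀ zero_le_one hr.2 hε hq⟩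
  · simp only [zero_div, zero_mul, Set.left_mem_Icc]; positivity

section ImportanceSampling

variable {Ω 𝒜 : Type*} [DecidableEq 𝒜] {A : ℕ → Ω → 𝒜} {R : ℕ → Ω → ℝ}
  {pol : ℕ → Ω → 𝒜 → ℝ} {rbar : 𝒜 → ℝ} {t n : ℕ} {a : 𝒜}

lemma Zis_eq (a : 𝒜) (n : ℕ) (ω : Ω) :
    Zis A R pol rbar a n ω = (if A n ω = a then 1 else 0) / pol n ω a * R n ω - rbar a := by
  by_cases h : A n ω = a <;> simp [Zis, h]

lemma natCast_mul_rIS_sub (ht : t ≠ 0) (a : 𝒜) (ω : Ω) :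
    t * (rIS A R pol t a ω - rbar a) = ∑ n ∈ Finset.Icc 1 t, Zis A R pol rbar a n ω := by
  simp only [rIS, Zis, Finset.sum_sub_distrib, Finset.sum_const, Nat.card_Icc, nsmul_eq_mul,
    Nat.add_sub_cancel]
  field_simp

lemma mul_rISPol_sub_rPol [Fintype 𝒜] (l : ℝ) (p : 𝒜 → ℝ) (ω : Ω) :
    l * (rISPol A R pol t p ω - rPol rbar p) = ∑ a, p a * (l * (rIS A R pol t a ω - rbar a)) := by
  simp only [rISPol, rPol, ← Finset.sum_sub_distrib, Finset.mul_sum]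
  exact Finset.sum_congr rfl fun a _ => by ring

lemma Zis_mem_Icc [MeasurableSpace Ω] {P : Measure Ω} {ε : ℝ}
    (hR01 : ∀ ω, R n ω ∈ Set.Icc (0 : ℝ) 1) (hε : 0 < ε) (hεpol : ∀ᵐ ω ∂P, ε ≤ pol n ω a) :
    ∀ᵐ ω ∂P, Zis A R pol rbar a n ω ∈ Set.Icc (-rbar a) (ε⁻¹ - rbar a) := by
  filter_upwards [hεpol] with ω hω
  have h := ite_div_mul_mem_Icc (A n ω = a) hε hω (hR01 ω)
  rw [Zis_eq]
  exact ⟨by linarith [h.1], by linarith [h.2]⟩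

variable [MeasurableSpace 𝒜] [MeasurableSingletonClass 𝒜]

lemma measurable_ite_div_mul {m : MeasurableSpace Ω} (hA : Measurable[m] (A n))
    (hpol : Measurable[m] fun ω => pol n ω a) (hR : Measurable[m] (R n)) :
    Measurable[m] fun ω => (if A n ω = a then 1 else 0) / pol n ω a * R n ω :=
  ((Measurable.ite (hA (measurableSet_singleton a)) measurable_const measurable_const).div
    hpol).mul hR

lemma stronglyMeasurable_Zis (hpol : Measurable[hist A R (n - 1)] fun ω => pol n ω a)
    (hn : 1 ≤ n) : StronglyMeasurable[hist A R n] (Zis A R pol rbar a n) := by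
  simp_rw [funext (Zis_eq (A := A) (R := R) (pol := pol) (rbar := rbar) a n)]
  exact ((measurable_ite_div_mul (measurable_A_hist hn le_rfl)
    (hpol.mono (hist_mono (Nat.sub_le n 1)) le_rfl)
    (measurable_R_hist hn le_rfl)).sub_const _).stronglyMeasurable

variable [MeasurableSpace Ω] {P : Measure Ω} [IsProbabilityMeasure P] {ε : ℝ}

lemma condExp_Zis_eq_zero (hA : ∀ n, Measurable (A n)) (hR : ∀ n, Measurable (R n))
    (hR01 : ∀ ω, R n ω ∈ Set.Icc (0 : ℝ) 1)
    (hpol : Measurable[hist A R (n - 1)] fun ω => pol n ω a)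
    (hpolCond : P[fun ω => if A n ω = a then (1 : ℝ) else 0 | hist A R (n - 1)]
      =ᵐ[P] fun ω => pol n ω a)
    (hrew : P[R n | hist A R (n - 1) ⊔ MeasurableSpace.comap (A n) inferInstance]
      =ᵐ[P] fun ω => rbar (A n ω))
    (hε : 0 < ε) (hεpol : ∀ᵐ ω ∂P, ε ≤ pol n ω a) :
    P[Zis A R pol rbar a n | hist A R (n - 1)] =ᵐ[P] 0 := by
  have hm : hist A R (n - 1) ≤ _ := (histFiltration hA hR).le (n - 1)
  have hRint : Integrable (R n) P := .of_mem_Icc 0 1 (hR n).aemeasurable (.of_forall hR01)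
  have hW : Integrable (fun ω => (if A n ω = a then 1 else 0) / pol n ω a * R n ω) P :=
    .of_mem_Icc 0 ε⁻¹
      (measurable_ite_div_mul (hA n) (hpol.mono hm le_rfl) (hR n)).aemeasurable
      (hεpol.mono fun ω hω => ite_div_mul_mem_Icc _ hε hω (hR01 ω))
  simp_rw [funext (Zis_eq (A := A) (R := R) (pol := pol) (rbar := rbar) a n)]
  filter_upwards [condExp_sub hW (integrable_const (rbar a)) (hist A R (n - 1)),
    condExp_ite_div_mul_of_condExp_eq_comp hm (hA n) hRint hrew hpol hpolCond hε hεpol]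
    with ω h1 h2
  refine h1.trans ?_
  rw [Pi.sub_apply, condExp_const hm, Pi.zero_apply, sub_eq_zero]
  exact h2

lemma hasSubgaussianMGF_natCast_mul_rIS_sub (ht : t ≠ 0)
    (hA : ∀ n, Measurable (A n)) (hR : ∀ n, Measurable (R n))
    (hR01 : ∀ n ω, R n ω ∈ Set.Icc (0 : ℝ) 1)
    (hpolMeas : ∀ n a, Measurable[hist A R (n - 1)] (fun ω => pol n ω a))
    (hpolCond : ∀ n, 1 ≤ n → n ≤ t → ∀ a : 𝒜,
      (P[(fun ω => if A n ω = a then (1 : ℝ) else 0) | hist A R (n - 1)])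
        =ᵐ[P] fun ω => pol n ω a)
    (hrew : ∀ n, 1 ≤ n → n ≤ t →
      (P[R n | hist A R (n - 1) ⊔ MeasurableSpace.comap (A n) inferInstance])
        =ᵐ[P] fun ω => rbar (A n ω))
    (hε : 0 < ε) (hεpol : ∀ n, 1 ≤ n → n ≤ t → ∀ a : 𝒜, ∀ᵐ ω ∂P, ε ≤ pol n ω a) (a : 𝒜) :
    HasSubgaussianMGF (fun ω => t * (rIS A R pol t a ω - rbar a)) (t * (‖ε⁻¹‖₊ / 2) ^ 2) P := by
  have h := hasSubgaussianMGF_sum_Icc_of_condExp_eq_zero (histFiltration hA hR)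
    (Z := fun n => Zis A R pol rbar a n) (a := -rbar a) (b := ε⁻¹ - rbar a)
    (fun n hn => stronglyMeasurable_Zis (hpolMeas n a) (Finset.mem_Icc.1 hn).1)
    (fun n hn => have ⟨h1, h2⟩ := Finset.mem_Icc.1 hn
      Zis_mem_Icc (hR01 n) hε (hεpol n h1 h2 a))
    (fun n hn => have ⟨h1, h2⟩ := Finset.mem_Icc.1 hn
      condExp_Zis_eq_zero hA hR (hR01 n) (hpolMeas n a) (hpolCond n h1 h2 a) (hrew n h1 h2) hε
        (hεpol n h1 h2 a))
  rw [sub_neg_eq_add, sub_add_cancel] at h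
  simpa only [natCast_mul_rIS_sub ht] using h

end ImportanceSampling

theorem exp_sup_inequality_hoeffding_general
    {Ω 𝒜 : Type*} [MeasurableSpace Ω] [Fintype 𝒜] [DecidableEq 𝒜]
    [MeasurableSpace 𝒜] [MeasurableSingletonClass 𝒜]
    (P : Measure Ω) [IsProbabilityMeasure P]
    -- the horizon
    (t : ℕ) (ht : 1 ≤ t)
    -- the action and reward processes
    (A : ℕ → Ω → 𝒜) (R : ℕ → Ω → ℝ)
    (hA : ∀ n, Measurable (A n)) (hR : ∀ n, Measurable (R n))
    (hR01 : ∀ n ω, R n ω ∈ Set.Icc (0 : ℝ) 1)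
    -- the logging policies: `ℱ_{n-1}`-measurable pmfs on `𝒜`
    (pol : ℕ → Ω → 𝒜 → ℝ)
    (hpolMeas : ∀ n a, Measurable[hist A R (n - 1)] (fun ω => pol n ω a))
    -- the conditional distribution of `A_n` given `ℱ_{n-1}` is `π_n`
    (hpolCond : ∀ n, 1 ≤ n → n ≤ t → ∀ a : 𝒜,
      (P[(fun ω => if A n ω = a then (1 : ℝ) else 0) | hist A R (n - 1)])
        =ᵐ[P] fun ω => pol n ω a)
    -- the mean-reward function: `E[R_n | ℱ_{n-1}, A_n] = r̄(A_n)`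
    (rbar : 𝒜 → ℝ)
    (hrew : ∀ n, 1 ≤ n → n ≤ t →
      (P[R n | hist A R (n - 1) ⊔ MeasurableSpace.comap (A n) inferInstance])
        =ᵐ[P] fun ω => rbar (A n ω))
    -- a uniform lower bound on the logging policies
    (ε : ℝ) (hε0 : 0 < ε)
    (hεpol : ∀ n, 1 ≤ n → n ≤ t → ∀ a : 𝒜, ∀ᵐ ω ∂P, ε ≤ pol n ω a)
    -- the prior policy
    (μ : 𝒜 → ℝ) (hμ : IsPMF μ)
    (l : ℝ) :
    ∫ ω, Real.exp
        ((⨆ p : {p : 𝒜 → ℝ // IsPMF p ∧ ∀ a, μ a = 0 → p a = 0},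
            (l * (rISPol A R pol t p.1 ω - rPol rbar p.1) - KL p.1 μ))
          - l ^ 2 / (8 * t * ε ^ 2)) ∂P ≤ 1 := by
  have ht0 : t ≠ 0 := Nat.one_le_iff_ne_zero.1 ht
  have hX := hasSubgaussianMGF_natCast_mul_rIS_sub ht0 hA hR hR01 hpolMeas hpolCond hrew hε0 hεpol
  refine integral_exp_sub_le_one_of_le_sum_mul_exp hμ
    (Y := fun a ω => l / t * (t * (rIS A R pol t a ω - rbar a)))
    (fun a => (hX a).integrable_exp_mul _) (fun a => ((hX a).mgf_le _).trans_eq ?_) fun ω => ?_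
  · -- the variance proxy `t / (4 ε²)` of `t (r̂(a) - r̄(a))`, taken at `s = λ / t`
    push_cast
    rw [norm_inv, Real.norm_of_nonneg hε0.le]
    field_simp
    norm_num
  · simp_rw [mul_rISPol_sub_rPol]
    convert exp_iSup_sum_mul_sub_KL_le hμ _ using 4 with a
    field_simp

/-- **Exponential supremum inequality (Donsker–Varadhan plus Hoeffding–Azuma step)**:
`E[exp(sup_π {λ (r̂^IS(π,H^t) − r̄(π)) − KL(π‖μ)} − λ²/(8 t ε²))] ≤ 1`. -/
theorem exp_sup_inequality_hoeffding
    {Ω 𝒜 : Type*} [MeasurableSpace Ω] [Fintype 𝒜] [DecidableEq 𝒜]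
    [MeasurableSpace 𝒜] [MeasurableSingletonClass 𝒜]
    (P : Measure Ω) [IsProbabilityMeasure P]
    -- the horizon
    (t : ℕ) (ht : 1 ≤ t)
    -- the action and reward processes
    (A : ℕ → Ω → 𝒜) (R : ℕ → Ω → ℝ)
    (hA : ∀ n, Measurable (A n)) (hR : ∀ n, Measurable (R n))
    (hR01 : ∀ n ω, R n ω ∈ Set.Icc (0 : ℝ) 1)
    -- the logging policies: `ℱ_{n-1}`-measurable pmfs on `𝒜`
    (pol : ℕ → Ω → 𝒜 → ℝ)
    (hpolPMF : ∀ n ω, IsPMF (pol n ω))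
    (hpolMeas : ∀ n a, Measurable[hist A R (n - 1)] (fun ω => pol n ω a))
    -- the conditional distribution of `A_n` given `ℱ_{n-1}` is `π_n`
    (hpolCond : ∀ n, 1 ≤ n → n ≤ t → ∀ a : 𝒜,
      (P[(fun ω => if A n ω = a then (1 : ℝ) else 0) | hist A R (n - 1)])
        =ᵐ[P] fun ω => pol n ω a)
    -- the mean-reward function: `E[R_n | ℱ_{n-1}, A_n] = r̄(A_n)`
    (rbar : 𝒜 → ℝ) (hrbar : ∀ a, rbar a ∈ Set.Icc (0 : ℝ) 1)
    (hrew : ∀ n, 1 ≤ n → n ≤ t →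
      (P[R n | hist A R (n - 1) ⊔ MeasurableSpace.comap (A n) inferInstance])
        =ᵐ[P] fun ω => rbar (A n ω))
    -- a uniform lower bound on the logging policies
    (ε : ℝ) (hε0 : 0 < ε) (hε1 : ε ≤ 1)
    (hεpol : ∀ n, 1 ≤ n → n ≤ t → ∀ a : 𝒜, ∀ᵐ ω ∂P, ε ≤ pol n ω a)
    -- the prior policy
    (μ : 𝒜 → ℝ) (hμ : IsPMF μ)
    (l : ℝ) (hl : 0 < l) :
    ∫ ω, Real.exp
        ((⨆ p : {p : 𝒜 → ℝ // IsPMF p ∧ ∀ a, μ a = 0 → p a = 0},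
            (l * (rISPol A R pol t p.1 ω - rPol rbar p.1) - KL p.1 μ))
          - l ^ 2 / (8 * t * ε ^ 2)) ∂P ≤ 1 :=
  exp_sup_inequality_hoeffding_general P t ht A R hA hR hR01 pol hpolMeas hpolCond rbar hrew ε hε0
    hεpol μ hμ l

end OfflineBandits
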